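/- For L = 3, the set consisting of the four corner tiles together with the central tile rigidifies the 3×3 pattern under the coordinate-based propagation rule, and no set of fewer than 5 tiles does, so the minimum is 5 = 2·3 − 1. -/

import Mathlib

/-- Index of a tile of the `L × L` rotating-squares pattern: `(i, j)` with
`0 ≤ i, j ≤ L − 1`. -/
def IsTileIdx (L : ℕ) (t : ℕ × ℕ) : Prop := t.1 ≤ L - 1 ∧ t.2 ≤ L - 1

/-- Index of a hole of the `L × L` pattern: `(i, j)` with `0 ≤ i, j ≤ L − 2`;
hole `(i, j)` lies between tiles `(i, j)`, `(i+1, j)`, `(i, j+1)` and `(i+1, j+1)`. -/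
def IsHoleIdx (L : ℕ) (o : ℕ × ℕ) : Prop := o.1 + 1 ≤ L - 1 ∧ o.2 + 1 ≤ L - 1

/-- Hinge vertices of the pattern, shared between adjacent components:
`(false, i, j)` is the hinge joining tiles `(i, j)` and `(i+1, j)`, and
`(true, i, j)` is the hinge joining tiles `(i, j)` and `(i, j+1)`. -/
def IsHinge (L : ℕ) (h : Bool × ℕ × ℕ) : Prop :=
  if h.1 then h.2.1 ≤ L - 1 ∧ h.2.2 + 1 ≤ L - 1
  else h.2.1 + 1 ≤ L - 1 ∧ h.2.2 ≤ L - 1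

/-- The hinge `h` is a vertex of the tile `t`. -/
def TileHinge (L : ℕ) (t : ℕ × ℕ) (h : Bool × ℕ × ℕ) : Prop :=
  IsHinge L h ∧
    (if h.1 then h.2.1 = t.1 ∧ (h.2.2 = t.2 ∨ h.2.2 + 1 = t.2)
     else h.2.2 = t.2 ∧ (h.2.1 = t.1 ∨ h.2.1 + 1 = t.1))

/-- The hinge `h` is a vertex of the hole `o`: the four vertices of hole `(i, j)` are the
hinges of the four pairs of adjacent tiles surrounding it. -/
def HoleHinge (L : ℕ) (o : ℕ × ℕ) (h : Bool × ℕ × ℕ) : Prop :=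
  IsHinge L h ∧
    (if h.1 then h.2.2 = o.2 ∧ (h.2.1 = o.1 ∨ h.2.1 = o.1 + 1)
     else h.2.1 = o.1 ∧ (h.2.2 = o.2 ∨ h.2.2 = o.2 + 1))

/-- Components: `(true, t)` is the tile `t` and `(false, o)` is the hole `o`.
`CompHinge L c h` says the hinge `h` is a vertex of the component `c`. -/
def CompHinge (L : ℕ) (c : Bool × ℕ × ℕ) (h : Bool × ℕ × ℕ) : Prop :=
  if c.1 then TileHinge L c.2 h else HoleHinge L c.2 h

mutual
  /-- `CRigid L S c`: starting from the set `S` of explicitly rigidified tiles, the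
  component `c` becomes rigid under the coordinate-based propagation rule: a component
  (a parallelogram) is rigid as soon as three of its vertices have uniquely determined
  coordinates. -/
  inductive CRigid (L : ℕ) (S : Set (ℕ × ℕ)) : Bool × ℕ × ℕ → Prop
    | expl (t : ℕ × ℕ) : t ∈ S → CRigid L S (true, t)
    | prop (c h₁ h₂ h₃ : Bool × ℕ × ℕ) : h₁ ≠ h₂ → h₁ ≠ h₃ → h₂ ≠ h₃ →
        CompHinge L c h₁ → CompHinge L c h₂ → CompHinge L c h₃ →
        HDet L S h₁ → HDet L S h₂ → HDet L S h₃ → CRigid L S c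

  /-- `HDet L S h`: the coordinates of the vertex `h` are uniquely determined, namely
  `h` is a vertex of some rigid component. -/
  inductive HDet (L : ℕ) (S : Set (ℕ × ℕ)) : Bool × ℕ × ℕ → Prop
    | ofComp (c : Bool × ℕ × ℕ) (h : Bool × ℕ × ℕ) :
        CompHinge L c h → CRigid L S c → HDet L S h
end

/-- The set `S` of explicitly rigidified tiles rigidifies the whole `L × L` pattern:
every tile and every hole becomes rigid. -/
def Rigidifies (L : ℕ) (S : Set (ℕ × ℕ)) : Prop :=
  (∀ t : ℕ × ℕ, IsTileIdx L t → CRigid L S (true, t)) ∧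
  (∀ o : ℕ × ℕ, IsHoleIdx L o → CRigid L S (false, o))

/-!
A corner tile has only two hinges, so it is rigid only if it is chosen explicitly, and every
rigidifying set contains the four corners. The corners determine only the eight hinges off the
central tile, and no component has three of those, so the corners alone propagate nothing.
The corners and the centre together determine all twelve hinges, and every other tile and every
hole has at least three of them.
-/

instance (L : ℕ) (h : Bool × ℕ × ℕ) : Decidable (IsHinge L h) := by
  unfold IsHinge
  split <;> infer_instance

instance (L : ℕ) (c h : Bool × ℕ × ℕ) : Decidable (CompHinge L c h) := by
  unfold CompHinge TileHinge HoleHinge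
  split <;> split <;> infer_instance

def IsCornerIdx (L : ℕ) (t : ℕ × ℕ) : Prop :=
  (t.1 = 0 ∨ t.1 = L - 1) ∧ (t.2 = 0 ∨ t.2 = L - 1)

def HasThreeHingesIn (L : ℕ) (H : Set (Bool × ℕ × ℕ)) (c : Bool × ℕ × ℕ) : Prop :=
  ∃ h₁ ∈ H, ∃ h₂ ∈ H, ∃ h₃ ∈ H, h₁ ≠ h₂ ∧ h₁ ≠ h₃ ∧ h₂ ≠ h₃ ∧
    CompHinge L c h₁ ∧ CompHinge L c h₂ ∧ CompHinge L c h₃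

def box (L : ℕ) : Finset (Bool × ℕ × ℕ) := Finset.univ ×ˢ Finset.Iic (L - 1) ×ˢ Finset.Iic (L - 1)

theorem mem_box {L : ℕ} {c : Bool × ℕ × ℕ} (h₁ : c.2.1 ≤ L - 1) (h₂ : c.2.2 ≤ L - 1) :
    c ∈ box L := by
  simp [box, h₁, h₂]

section General

variable {L : ℕ} {S : Set (ℕ × ℕ)}

theorem CompHinge.isHinge {c h : Bool × ℕ × ℕ} (hc : CompHinge L c h) : IsHinge L h := by
  unfold CompHinge at hc
  split at hc
  exacts [hc.1, hc.1]

theorem IsHinge.le {h : Bool × ℕ × ℕ} (hh : IsHinge L h) : h.2.1 ≤ L - 1 ∧ h.2.2 ≤ L - 1 := by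
  obtain ⟨_ | _, x, y⟩ := h <;>
    simp only [IsHinge, Bool.false_eq_true, ite_false, ite_true] at hh ⊢ <;> omega

theorem CompHinge.le {c h : Bool × ℕ × ℕ} (hc : CompHinge L c h) :
    c.2.1 ≤ L - 1 ∧ c.2.2 ≤ L - 1 := by
  obtain ⟨_ | _, x, y⟩ := c <;> obtain ⟨_ | _, x', y'⟩ := h <;>
    simp only [CompHinge, TileHinge, HoleHinge, IsHinge, Bool.false_eq_true, ite_false,
      ite_true] at hc ⊢ <;> omega

theorem cRigid_iff {c : Bool × ℕ × ℕ} :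
    CRigid L S c ↔ (∃ t ∈ S, c = (true, t)) ∨ HasThreeHingesIn L {h | HDet L S h} c := by
  constructor
  · rintro (⟨t, ht⟩ | ⟨c, h₁, h₂, h₃, h₁₂, h₁₃, h₂₃, c₁, c₂, c₃, d₁, d₂, d₃⟩)
    · exact .inl ⟨t, ht, rfl⟩
    · exact .inr ⟨h₁, d₁, h₂, d₂, h₃, d₃, h₁₂, h₁₃, h₂₃, c₁, c₂, c₃⟩
  · rintro (⟨t, ht, rfl⟩ | ⟨h₁, d₁, h₂, d₂, h₃, d₃, h₁₂, h₁₃, h₂₃, c₁, c₂, c₃⟩)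
    · exact .expl t ht
    · exact .prop c h₁ h₂ h₃ h₁₂ h₁₃ h₂₃ c₁ c₂ c₃ d₁ d₂ d₃

theorem CRigid.of_hasThreeHingesIn_univ (hdet : ∀ h, IsHinge L h → HDet L S h)
    {c : Bool × ℕ × ℕ} (hc : HasThreeHingesIn L Set.univ c) : CRigid L S c := by
  obtain ⟨h₁, -, h₂, -, h₃, -, h₁₂, h₁₃, h₂₃, c₁, c₂, c₃⟩ := hc
  exact cRigid_iff.2 <| .inr ⟨h₁, hdet _ c₁.isHinge, h₂, hdet _ c₂.isHinge, h₃,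
    hdet _ c₃.isHinge, h₁₂, h₁₃, h₂₃, c₁, c₂, c₃⟩

theorem hasThreeHingesIn_univ_hole {o : ℕ × ℕ} (ho : IsHoleIdx L o) :
    HasThreeHingesIn L Set.univ (false, o) := by
  obtain ⟨i, j⟩ := o
  refine ⟨(true, i, j), trivial, (true, i + 1, j), trivial, (false, i, j), trivial,
    by simp, by simp, by simp, ?_, ?_, ?_⟩ <;>
  simp only [IsHoleIdx, CompHinge, HoleHinge, IsHinge] at ho ⊢ <;> simp <;> omega

theorem hasThreeHingesIn_univ_tile {t : ℕ × ℕ} (ht : IsTileIdx L t) (hnc : ¬IsCornerIdx L t) :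
    HasThreeHingesIn L Set.univ (true, t) := by
  obtain ⟨i, j⟩ := t
  simp only [IsTileIdx, IsCornerIdx] at ht hnc
  have of_hinges : ∀ a b c, a ≠ b → a ≠ c → b ≠ c → CompHinge L (true, (i, j)) a →
      CompHinge L (true, (i, j)) b → CompHinge L (true, (i, j)) c →
      HasThreeHingesIn L Set.univ (true, (i, j)) :=
    fun a b c hab hac hbc ha hb hc =>
      ⟨a, trivial, b, trivial, c, trivial, hab, hac, hbc, ha, hb, hc⟩
  -- `min i (L - 2)` indexes the hinge below tile `(i, j)`, or the one above it in the last row.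
  by_cases hj : j ≠ 0 ∧ j ≠ L - 1
  · refine of_hinges (true, i, j - 1) (true, i, j) (false, min i (L - 2), j) ?_ ?_ ?_ ?_ ?_ ?_ <;>
      simp [CompHinge, TileHinge, IsHinge] <;> omega
  · refine of_hinges (false, i - 1, j) (false, i, j) (true, i, min j (L - 2)) ?_ ?_ ?_ ?_ ?_ ?_ <;>
      simp [CompHinge, TileHinge, IsHinge] <;> omega

theorem IsCornerIdx.eq_of_compHinge {t : ℕ × ℕ} (ht : IsCornerIdx L t) {h h' : Bool × ℕ × ℕ}
    (hh : CompHinge L (true, t) h) (hh' : CompHinge L (true, t) h') (hb : h.1 = h'.1) :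
    h = h' := by
  obtain ⟨i, j⟩ := t
  obtain ⟨b, x, y⟩ := h
  obtain ⟨b', x', y'⟩ := h'
  obtain rfl : b = b' := hb
  simp only [IsCornerIdx] at ht
  cases b <;> simp only [CompHinge, TileHinge, IsHinge, Bool.false_eq_true, ite_false,
    ite_true] at hh hh' ⊢ <;> simp only [Prod.mk.injEq, true_and] <;> omega

theorem IsCornerIdx.not_hasThreeHingesIn {t : ℕ × ℕ} (ht : IsCornerIdx L t)
    (H : Set (Bool × ℕ × ℕ)) : ¬HasThreeHingesIn L H (true, t) := by
  rintro ⟨h₁, -, h₂, -, h₃, -, h₁₂, h₁₃, h₂₃, c₁, c₂, c₃⟩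
  have pigeonhole : ∀ a b c : Bool, a = b ∨ a = c ∨ b = c := by decide
  rcases pigeonhole h₁.1 h₂.1 h₃.1 with e | e | e
  exacts [h₁₂ (ht.eq_of_compHinge c₁ c₂ e), h₁₃ (ht.eq_of_compHinge c₁ c₃ e),
    h₂₃ (ht.eq_of_compHinge c₂ c₃ e)]

theorem IsCornerIdx.mem_of_cRigid {t : ℕ × ℕ} (ht : IsCornerIdx L t)
    (hr : CRigid L S (true, t)) : t ∈ S := by
  rcases cRigid_iff.1 hr with ⟨t', ht', e⟩ | h3
  · simpa [(Prod.mk.inj e).2] using ht'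
  · exact absurd h3 (ht.not_hasThreeHingesIn _)

theorem CRigid.mem_of_closed (C H : Set (Bool × ℕ × ℕ)) (hS : ∀ t ∈ S, (true, t) ∈ C)
    (hCH : ∀ c ∈ C, ∀ h, CompHinge L c h → h ∈ H) (hH : ∀ c, ¬HasThreeHingesIn L H c)
    {c : Bool × ℕ × ℕ} (hr : CRigid L S c) : c ∈ C := by
  refine CRigid.rec (motive_1 := fun c _ => c ∈ C) (motive_2 := fun h _ => h ∈ H)
    (fun t ht => hS t ht) ?_ (fun c h hch _ hc => hCH c hc h hch) hr
  intro c h₁ h₂ h₃ h₁₂ h₁₃ h₂₃ c₁ c₂ c₃ _ _ _ m₁ m₂ m₃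
  exact absurd ⟨h₁, m₁, h₂, m₂, h₃, m₃, h₁₂, h₁₃, h₂₃, c₁, c₂, c₃⟩ (hH c)

end General

theorem isCornerIdx_three_iff {t : ℕ × ℕ} (ht : IsTileIdx 3 t) :
    IsCornerIdx 3 t ↔ t ∈ ({(0, 0), (0, 2), (2, 0), (2, 2)} : Set (ℕ × ℕ)) := by
  obtain ⟨i, j⟩ := t
  simp only [IsTileIdx, IsCornerIdx] at ht ⊢
  simp only [Set.mem_insert_iff, Set.mem_singleton_iff, Prod.mk.injEq]
  omega

theorem hDet_corners_center {h : Bool × ℕ × ℕ} (hh : IsHinge 3 h) :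
    HDet 3 ({(0, 0), (0, 2), (2, 0), (2, 2), (1, 1)} : Set (ℕ × ℕ)) h := by
  have covered : ∀ h ∈ box 3, IsHinge 3 h →
      ∃ t ∈ ([(0, 0), (0, 2), (2, 0), (2, 2), (1, 1)] : List (ℕ × ℕ)),
        CompHinge 3 (true, t) h := by
    decide
  obtain ⟨t, ht, hth⟩ := covered h (mem_box hh.le.1 hh.le.2) hh
  exact .ofComp _ h hth (.expl t (by simpa using ht))

theorem rigidifies_corners_center :
    Rigidifies 3 ({(0, 0), (0, 2), (2, 0), (2, 2), (1, 1)} : Set (ℕ × ℕ)) := by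
  refine ⟨fun t ht => ?_, fun o ho =>
    .of_hasThreeHingesIn_univ (fun _ => hDet_corners_center) (hasThreeHingesIn_univ_hole ho)⟩
  by_cases hS : t ∈ ({(0, 0), (0, 2), (2, 0), (2, 2), (1, 1)} : Set (ℕ × ℕ))
  · exact .expl t hS
  · refine .of_hasThreeHingesIn_univ (fun _ => hDet_corners_center) <|
      hasThreeHingesIn_univ_tile ht fun hc => hS ?_
    exact Set.mem_of_mem_of_subset ((isCornerIdx_three_iff ht).1 hc)
      (by simp [Set.insert_subset_iff])

theorem corner_of_cRigid_corners {c : Bool × ℕ × ℕ}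
    (hr : CRigid 3 ({(0, 0), (0, 2), (2, 0), (2, 2)} : Set (ℕ × ℕ)) c) :
    c.1 = true ∧ c.2 ∈ ({(0, 0), (0, 2), (2, 0), (2, 2)} : Set (ℕ × ℕ)) := by
  let offCenter := (box 3).filter fun h => IsHinge 3 h ∧ ¬CompHinge 3 (true, (1, 1)) h
  have corner_hinges : ∀ t ∈ ([(0, 0), (0, 2), (2, 0), (2, 2)] : List (ℕ × ℕ)), ∀ h ∈ box 3,
      CompHinge 3 (true, t) h → h ∈ offCenter := by
    decide
  have two_offCenter : ∀ c ∈ box 3, (offCenter.filter (CompHinge 3 c)).card ≤ 2 := by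
    decide
  refine CRigid.mem_of_closed {c | c.1 = true ∧ c.2 ∈ _} offCenter
    (fun t ht => ⟨rfl, ht⟩) ?_ ?_ hr
  · rintro ⟨_, t⟩ ⟨rfl, ht⟩ h hh
    have hh' := hh.isHinge.le
    exact corner_hinges t (by simpa using ht) h (mem_box hh'.1 hh'.2) hh
  · rintro c ⟨h₁, m₁, h₂, m₂, h₃, m₃, h₁₂, h₁₃, h₂₃, c₁, c₂, c₃⟩
    have hc := c₁.le
    refine (two_offCenter c (mem_box hc.1 hc.2)).not_gt (Finset.two_lt_card.2 ?_)
    exact ⟨h₁, by simpa using ⟨m₁, c₁⟩, h₂, by simpa using ⟨m₂, c₂⟩, h₃,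
      by simpa using ⟨m₃, c₃⟩, h₁₂, h₁₃, h₂₃⟩

theorem five_le_card_of_rigidifies {S : Finset (ℕ × ℕ)} (hS : Rigidifies 3 ↑S) : 5 ≤ S.card := by
  have corners_sub : ({(0, 0), (0, 2), (2, 0), (2, 2)} : Finset (ℕ × ℕ)) ⊆ S := by
    intro t ht
    have htile : IsTileIdx 3 t := by fin_cases ht <;> simp [IsTileIdx]
    exact ((isCornerIdx_three_iff htile).2 (by simpa using ht)).mem_of_cRigid (hS.1 t htile)
  by_contra! hlt
  have hS4 : S = {(0, 0), (0, 2), (2, 0), (2, 2)} :=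
    (Finset.eq_of_subset_of_card_le corners_sub (by simp; omega)).symm
  have center := hS.1 (1, 1) (by simp [IsTileIdx])
  rw [hS4] at center
  exact absurd (corner_of_cRigid_corners (by simpa using center)).2 (by simp)

/-- For `L = 3`, the four corner tiles together with the central tile rigidify the
`3 × 3` pattern under the coordinate-based propagation rule, and no set of fewer than
`5` tiles does; so the minimum is `5 = 2·3 − 1`. -/
theorem three_by_three_coordinate :
    Rigidifies 3 ({(0, 0), (0, 2), (2, 0), (2, 2), (1, 1)} : Set (ℕ × ℕ)) ∧
    ∀ S : Finset (ℕ × ℕ), (∀ t ∈ S, IsTileIdx 3 t) → Rigidifies 3 ↑S →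
      5 ≤ S.card :=
  ⟨rigidifies_corners_center, fun _ _ => five_le_card_of_rigidifies⟩
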